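/- A-posteriori energy drift bound for the true Hamiltonian: Let Ω ⊂ ℝ^{2d} be compact, Δt > 0, and let ψ̄ : [0,Δt] × Ω → Ω satisfy ψ̄(0,x) = x, be differentiable in time, and map Ω into Ω for every t ∈ [0,Δt]. Let H : ℝ^{2d} → ℝ be continuously differentiable with Lipschitz constant at most C on Ω, and suppose the residual bound ‖∂_t ψ̄_t(x) − J ∇H(ψ̄_t(x))‖₂ ≤ ε₂ holds for all t ∈ [0,Δt] and x ∈ Ω. Define the long-time extension ψ(t,x) = ψ̄_{t − Δt⌊t/Δt⌋}((ψ̄_{Δt})^{⌊t/Δt⌋}(x)) for t ≥ 0. Then for every t ≥ 0 and x ∈ Ω, |H(ψ(t,x)) − H(x)| ≤ C ε₂ t. -/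

import Mathlib

/-!
Along an exact Hamiltonian flow the energy is conserved, because `dH(y) (J∇H(y)) = 0`. Hence along
`ψ̄` the energy changes at rate `dH(ψ̄_t x) (∂_t ψ̄_t x - J∇H(ψ̄_t x))`, which Cauchy–Schwarz bounds
by `C ε₂`; the mean value theorem gives a drift of at most `C ε₂ s` over each piece of length `s`,
and these bounds add up along the pieces of the long-time extension.
-/

noncomputable section

/-- Phase-space factor `ℝ^d`. -/
abbrev Vec (d : ℕ) := EuclideanSpace ℝ (Fin d)

/-- Phase space `ℝ^{2d}` split as positions and momenta. -/
abbrev Phase (d : ℕ) := Vec d × Vec d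

/-- Gradient with respect to the position variable. -/
def gradQ {d : ℕ} (H : Phase d → ℝ) (x : Phase d) : Vec d :=
  gradient (fun q => H (q, x.2)) x.1

/-- Gradient with respect to the momentum variable. -/
def gradP {d : ℕ} (H : Phase d → ℝ) (x : Phase d) : Vec d :=
  gradient (fun p => H (x.1, p)) x.2

/-- `J ∇H (q,p) = (∇ₚH(q,p), −∇_qH(q,p))`. -/
def JgradH {d : ℕ} (H : Phase d → ℝ) (x : Phase d) : Phase d :=
  (gradP H x, - gradQ H x)

/-- The Euclidean (`ℓ²`) norm on `ℝ^{2d} = ℝ^d × ℝ^d`. -/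
def l2norm {d : ℕ} (x : Phase d) : ℝ := Real.sqrt (‖x.1‖ ^ 2 + ‖x.2‖ ^ 2)

open Set
open scoped RealInnerProductSpace

section Phase

variable {d : ℕ}

lemma l2norm_eq_norm_toLp (x : Phase d) : l2norm x = ‖WithLp.toLp 2 x‖ :=
  (WithLp.prod_norm_eq_of_L2 _).symm

lemma l2norm_nonneg (x : Phase d) : 0 ≤ l2norm x := Real.sqrt_nonneg _

lemma abs_inner_add_inner_le_l2norm_mul (a b : Phase d) :
    |⟪a.1, b.1⟫ + ⟪a.2, b.2⟫| ≤ l2norm a * l2norm b := by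
  rw [l2norm_eq_norm_toLp, l2norm_eq_norm_toLp]
  exact abs_real_inner_le_norm (WithLp.toLp 2 a) (WithLp.toLp 2 b)

lemma fderiv_apply_eq_inner_gradQ_add_inner_gradP {H : Phase d → ℝ} {y : Phase d}
    (hH : DifferentiableAt ℝ H y) (v : Phase d) :
    fderiv ℝ H y v = ⟪gradQ H y, v.1⟫ + ⟪gradP H y, v.2⟫ := by
  have hq : HasFDerivAt (fun q => H (q, y.2))
      ((fderiv ℝ H y).comp (ContinuousLinearMap.inl ℝ (Vec d) (Vec d))) y.1 :=
    hH.hasFDerivAt.comp y.1 (hasFDerivAt_prodMk_left y.1 y.2)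
  have hp : HasFDerivAt (fun p => H (y.1, p))
      ((fderiv ℝ H y).comp (ContinuousLinearMap.inr ℝ (Vec d) (Vec d))) y.2 :=
    hH.hasFDerivAt.comp y.2 (hasFDerivAt_prodMk_right y.1 y.2)
  rw [gradQ, gradP, gradient, gradient, InnerProductSpace.toDual_symm_apply,
    InnerProductSpace.toDual_symm_apply, hq.fderiv, hp.fderiv]
  simp only [ContinuousLinearMap.comp_apply, ContinuousLinearMap.inl_apply,
    ContinuousLinearMap.inr_apply, ← map_add, Prod.mk_add_mk, add_zero, zero_add]

lemma fderiv_apply_JgradH {H : Phase d → ℝ} {y : Phase d} (hH : DifferentiableAt ℝ H y) :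
    fderiv ℝ H y (JgradH H y) = 0 := by
  rw [fderiv_apply_eq_inner_gradQ_add_inner_gradP hH, JgradH, inner_neg_right,
    real_inner_comm, add_neg_cancel]

lemma abs_fderiv_apply_le_l2norm_mul_residual {H : Phase d → ℝ} {y : Phase d}
    (hH : DifferentiableAt ℝ H y) (v : Phase d) :
    |fderiv ℝ H y v| ≤ l2norm (gradQ H y, gradP H y) * l2norm (v - JgradH H y) := by
  have hv : fderiv ℝ H y v = fderiv ℝ H y (v - JgradH H y) := by
    rw [map_sub, fderiv_apply_JgradH hH, sub_zero]
  rw [hv, fderiv_apply_eq_inner_gradQ_add_inner_gradP hH]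
  exact abs_inner_add_inner_le_l2norm_mul (gradQ H y, gradP H y) _

lemma abs_sub_le_of_hamiltonian_residual_le {H : Phase d → ℝ} (hH : Differentiable ℝ H)
    {γ γ' : ℝ → Phase d} {T C ε : ℝ}
    (hγ : ∀ t ∈ Icc 0 T, HasDerivWithinAt γ (γ' t) (Icc 0 T) t)
    (hgrad : ∀ t ∈ Icc 0 T, l2norm (gradQ H (γ t), gradP H (γ t)) ≤ C)
    (hres : ∀ t ∈ Icc 0 T, l2norm (γ' t - JgradH H (γ t)) ≤ ε)
    {s : ℝ} (hs : s ∈ Icc 0 T) :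
    |H (γ s) - H (γ 0)| ≤ C * ε * s := by
  have hC : 0 ≤ C := (l2norm_nonneg _).trans (hgrad s hs)
  have hderiv : ∀ t ∈ Icc 0 T,
      HasDerivWithinAt (H ∘ γ) (fderiv ℝ H (γ t) (γ' t)) (Icc 0 T) t :=
    fun t ht => (hH (γ t)).hasFDerivAt.comp_hasDerivWithinAt t (hγ t ht)
  have hrate : ∀ t ∈ Icc 0 T, ‖fderiv ℝ H (γ t) (γ' t)‖ ≤ C * ε := fun t ht =>
    (abs_fderiv_apply_le_l2norm_mul_residual (hH (γ t)) (γ' t)).trans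
      (mul_le_mul (hgrad t ht) (hres t ht) (l2norm_nonneg _) hC)
  have h0 : (0 : ℝ) ∈ Icc 0 T := ⟨le_rfl, hs.1.trans hs.2⟩
  simpa [abs_of_nonneg hs.1] using
    (convex_Icc 0 T).norm_image_sub_le_of_norm_hasDerivWithin_le hderiv hrate h0 hs

end Phase

section LongTimeExtension

variable {α : Type*} {V : α → ℝ} {Ω : Set α}

lemma abs_sub_iterate_le {f : α → α} {c : ℝ} (hf : MapsTo f Ω Ω)
    (hstep : ∀ y ∈ Ω, |V (f y) - V y| ≤ c) {x : α} (hx : x ∈ Ω) (n : ℕ) :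
    |V (f^[n] x) - V x| ≤ c * n := by
  induction n with
  | zero => simp
  | succ n ih =>
    rw [Function.iterate_succ_apply']
    calc |V (f (f^[n] x)) - V x|
        ≤ |V (f (f^[n] x)) - V (f^[n] x)| + |V (f^[n] x) - V x| := abs_sub_le _ _ _
      _ ≤ c + c * n := add_le_add (hstep _ (hf.iterate n hx)) ih
      _ = c * (n + 1 : ℕ) := by push_cast; ring

lemma sub_mul_floor_div_mem_Icc {t Δt : ℝ} (ht : 0 ≤ t) (hΔt : 0 < Δt) :
    t - Δt * ⌊t / Δt⌋₊ ∈ Icc 0 Δt := by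
  have hle : (⌊t / Δt⌋₊ : ℝ) ≤ t / Δt := Nat.floor_le (div_nonneg ht hΔt.le)
  have hlt : t / Δt < ⌊t / Δt⌋₊ + 1 := Nat.lt_floor_add_one _
  rw [le_div_iff₀ hΔt] at hle
  rw [div_lt_iff₀ hΔt] at hlt
  constructor <;> linarith

lemma abs_sub_le_of_long_time_extension {φ : ℝ → α → α} {Δt K : ℝ} (hΔt : 0 < Δt)
    (hmap : MapsTo (φ Δt) Ω Ω) (hstep : ∀ s ∈ Icc 0 Δt, ∀ y ∈ Ω, |V (φ s y) - V y| ≤ K * s)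
    {t : ℝ} (ht : 0 ≤ t) {x : α} (hx : x ∈ Ω) :
    |V (φ (t - Δt * ⌊t / Δt⌋₊) ((φ Δt)^[⌊t / Δt⌋₊] x)) - V x| ≤ K * t := by
  set n := ⌊t / Δt⌋₊
  set y := (φ Δt)^[n] x
  have hΔt_mem : Δt ∈ Icc 0 Δt := ⟨hΔt.le, le_rfl⟩
  calc |V (φ (t - Δt * n) y) - V x|
      ≤ |V (φ (t - Δt * n) y) - V y| + |V y - V x| := abs_sub_le _ _ _
    _ ≤ K * (t - Δt * n) + K * Δt * n :=
        add_le_add (hstep _ (sub_mul_floor_div_mem_Icc ht hΔt) y (hmap.iterate n hx))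
          (abs_sub_iterate_le hmap (hstep Δt hΔt_mem) hx n)
    _ = K * t := by ring

end LongTimeExtension

theorem aposteriori_true_hamiltonian_drift
    (d : ℕ) (Ω : Set (Phase d))
    (Δt : ℝ) (hΔt : 0 < Δt)
    (ψb : ℝ → Phase d → Phase d)
    (hψ0 : ∀ x ∈ Ω, ψb 0 x = x)
    (hmap : ∀ t ∈ Set.Icc (0:ℝ) Δt, ∀ x ∈ Ω, ψb t x ∈ Ω)
    (H : Phase d → ℝ) (hH : ContDiff ℝ 1 H)
    (C : ℝ)
    (hLip : ∀ x ∈ Ω, l2norm (gradQ H x, gradP H x) ≤ C)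
    (D : ℝ → Phase d → Phase d)
    (hD : ∀ t ∈ Set.Icc (0:ℝ) Δt, ∀ x ∈ Ω,
      HasDerivWithinAt (fun s => ψb s x) (D t x) (Set.Icc 0 Δt) t)
    (ε₂ : ℝ)
    (hres : ∀ t ∈ Set.Icc (0:ℝ) Δt, ∀ x ∈ Ω,
      l2norm (D t x - JgradH H (ψb t x)) ≤ ε₂) :
    ∀ t ≥ (0:ℝ), ∀ x ∈ Ω,
      |H (ψb (t - Δt * (⌊t / Δt⌋₊ : ℝ)) ((ψb Δt)^[⌊t / Δt⌋₊] x)) - H x| ≤ C * ε₂ * t := by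
  intro t ht x hx
  refine abs_sub_le_of_long_time_extension hΔt (fun y hy => hmap Δt ⟨hΔt.le, le_rfl⟩ y hy)
    (fun s hs y hy => ?_) ht hx
  have hdrift := abs_sub_le_of_hamiltonian_residual_le (hH.differentiable one_ne_zero)
    (hD · · y hy) (fun u hu => hLip _ (hmap u hu y hy)) (fun u hu => hres u hu y hy) hs
  rwa [hψ0 y hy] at hdrift
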